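/- Let $\mathbf{z}\in\mathbb{R}^C$ be sorted descendingly, $0 < T < 1$, $\Delta z = z_1 - z_2$, and $d(\mathbf{z};T,i) = \frac{e^{z_i}}{\sum_j e^{z_j}} - \frac{e^{z_i/T}}{\sum_j e^{z_j/T}}$. If $d(\mathbf{z};T,1) < 0$ and $d(\mathbf{z};T,i) \geq 0$ for all $i \geq 2$, then for all $M, L \in \{1,\dots,C\}$: $|g(\mathbf{z};T,M) - g(\mathbf{z};T,L)| < \frac{(C-1)e^{-\Delta z}}{(C-1)e^{-\Delta z}+1}$, where $g(\mathbf{z};T,M) = \sum_{i=1}^M d(\mathbf{z};T,i)$. -/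

import Mathlib

noncomputable def dfun {C : ℕ} (z : Fin C → ℝ) (T : ℝ) (i : Fin C) : ℝ :=
  Real.exp (z i) / (∑ j, Real.exp (z j)) - Real.exp (z i / T) / (∑ j, Real.exp (z j / T))

noncomputable def gsum {C : ℕ} (z : Fin C → ℝ) (T : ℝ) (M : ℕ) : ℝ :=
  ∑ i ∈ Finset.univ.filter (fun i : Fin C => (i : ℕ) < M), dfun z T i

/-!
The differences `dfun z T i` sum to zero, so when all but the first are nonnegative every partial
sum `gsum z T M` with `M ≥ 1` lies in `[dfun z T 0, 0]`. Hence the gap between two partial sums is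
at most `-dfun z T 0`, which is the tempered softmax probability of the top class (strictly less
than one) minus its plain softmax probability; for sorted `z` the latter is at least
`1 / ((C - 1) e^{-Δz} + 1)`.
-/

open Finset Real

noncomputable def softmax {ι : Type*} [Fintype ι] (x : ι → ℝ) (i : ι) : ℝ :=
  exp (x i) / ∑ j, exp (x j)

section Softmax

variable {ι : Type*} [Fintype ι] (x : ι → ℝ)

theorem sum_softmax [Nonempty ι] : ∑ i, softmax x i = 1 := by
  unfold softmax
  rw [← sum_div]
  exact div_self (sum_pos (fun j _ => exp_pos (x j)) univ_nonempty).ne'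

theorem softmax_lt_one [Nontrivial ι] (i : ι) : softmax x i < 1 := by
  obtain ⟨j, hji⟩ := exists_ne i
  unfold softmax
  rw [div_lt_one (sum_pos (fun j _ => exp_pos (x j)) univ_nonempty)]
  exact single_lt_sum hji (mem_univ i) (mem_univ j) (exp_pos _) fun k _ _ => (exp_pos _).le

end Softmax

theorem sum_exp_le_of_antitone {n : ℕ} {z : Fin (n + 2) → ℝ} (hz : Antitone z) :
    ∑ j, exp (z j) ≤ exp (z 0) + (n + 1) * exp (z 1) := by
  rw [Fin.sum_univ_succ]
  gcongr
  calc ∑ j : Fin (n + 1), exp (z j.succ) ≤ ∑ _j : Fin (n + 1), exp (z 1) :=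
        sum_le_sum fun j _ => exp_le_exp.mpr (hz (Fin.succ_le_succ_iff.mpr (Fin.zero_le j)))
    _ = (n + 1) * exp (z 1) := by simp

theorem one_sub_softmax_zero_le {n : ℕ} {z : Fin (n + 2) → ℝ} (hz : Antitone z) :
    1 - softmax z 0 ≤
      (n + 1) * exp (-(z 0 - z 1)) / ((n + 1) * exp (-(z 0 - z 1)) + 1) := by
  set a := exp (z 0)
  set b := exp (z 1)
  have ha : 0 < a := exp_pos _
  have hb : 0 < b := exp_pos _
  have hsoftmax : a / (a + (n + 1) * b) ≤ softmax z 0 :=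
    div_le_div_of_nonneg_left ha.le (sum_pos (fun j _ => exp_pos (z j)) univ_nonempty)
      (sum_exp_le_of_antitone hz)
  have hrhs : (n + 1) * exp (-(z 0 - z 1)) / ((n + 1) * exp (-(z 0 - z 1)) + 1) =
      1 - a / (a + (n + 1) * b) := by
    rw [neg_sub, exp_sub]
    field_simp
    ring
  linarith

theorem dfun_eq_softmax_sub {C : ℕ} (z : Fin C → ℝ) (T : ℝ) (i : Fin C) :
    dfun z T i = softmax z i - softmax (fun j => z j / T) i := rfl

section Gsum

variable {C : ℕ} [NeZero C]

theorem sum_dfun (z : Fin C → ℝ) (T : ℝ) : ∑ i, dfun z T i = 0 := by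
  simp only [dfun_eq_softmax_sub, sum_sub_distrib, sum_softmax, sub_self]

variable {z : Fin C → ℝ} {T : ℝ}

theorem gsum_nonpos (hd : ∀ i : Fin C, 1 ≤ (i : ℕ) → 0 ≤ dfun z T i) {N : ℕ} (hN : 0 < N) :
    gsum z T N ≤ 0 := by
  have hsplit := sum_filter_add_sum_filter_not univ (fun i : Fin C => (i : ℕ) < N) (dfun z T)
  rw [sum_dfun] at hsplit
  have htail : 0 ≤ ∑ i ∈ univ.filter (fun i : Fin C => ¬(i : ℕ) < N), dfun z T i :=
    sum_nonneg fun i hi => hd i (by simp only [mem_filter] at hi; omega)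
  rw [gsum]
  linarith

theorem dfun_zero_le_gsum (hd : ∀ i : Fin C, 1 ≤ (i : ℕ) → 0 ≤ dfun z T i) {N : ℕ}
    (hN : 0 < N) : dfun z T 0 ≤ gsum z T N := by
  rw [gsum, ← sum_singleton (dfun z T) 0]
  refine sum_le_sum_of_subset_of_nonneg (by simpa using hN) fun i _ hi => hd i ?_
  exact Nat.one_le_iff_ne_zero.mpr (Fin.val_ne_zero_iff.mpr (notMem_singleton.mp hi))

end Gsum

theorem neg_dfun_zero_lt {n : ℕ} {z : Fin (n + 2) → ℝ} (hz : Antitone z) (T : ℝ) :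
    -dfun z T 0 <
      (n + 1) * exp (-(z 0 - z 1)) / ((n + 1) * exp (-(z 0 - z 1)) + 1) := by
  rw [dfun_eq_softmax_sub]
  linarith [softmax_lt_one (fun j => z j / T) 0, one_sub_softmax_zero_le hz]

theorem stmt_16 {C : ℕ} (hC : 2 ≤ C) (z : Fin C → ℝ)
    (hz : ∀ i j : Fin C, i ≤ j → z j ≤ z i)
    (T : ℝ)
    (h2 : ∀ i : Fin C, 1 ≤ (i : ℕ) → 0 ≤ dfun z T i) :
    ∀ M L : ℕ, 1 ≤ M → M ≤ C → 1 ≤ L → L ≤ C →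
      |gsum z T M - gsum z T L| <
        ((C : ℝ) - 1) * Real.exp (-(z ⟨0, by omega⟩ - z ⟨1, by omega⟩)) /
          (((C : ℝ) - 1) * Real.exp (-(z ⟨0, by omega⟩ - z ⟨1, by omega⟩)) + 1) := by
  intro M L hM _ hL _
  obtain ⟨n, rfl⟩ := Nat.exists_eq_add_of_le' hC
  have hcast : ((n + 2 : ℕ) : ℝ) - 1 = n + 1 := by push_cast; ring
  simp only [Fin.zero_eta, Fin.mk_one, hcast]
  have hbound := neg_dfun_zero_lt hz T
  rw [abs_sub_lt_iff]
  constructor <;>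
    linarith [dfun_zero_le_gsum h2 hM, dfun_zero_le_gsum h2 hL, gsum_nonpos h2 hM,
      gsum_nonpos h2 hL]
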